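/- Let E be a real Banach space, let x₀, g ∈ E, let L ≥ 0, and let v : ℝ → E → E be such that for every t ∈ [0,1] the map v t : E → E is Lipschitz with constant L, and t ↦ v(t, (1−t)·x₀ + t·g) is continuous on [0,1]. Suppose ψ : ℝ → E satisfies ψ 0 = x₀ and has derivative (d/dt) ψ(t) = v(t, ψ(t)) at every t ∈ [0,1]. Then the squared endpoint discrepancy satisfies ‖ψ(1) − g‖² ≤ exp(2L) · ∫_0^1 ‖v(t, (1−t)·x₀ + t·g) − (g − x₀)‖² dt. (Squared Grönwall flow-discrepancy bound: combining the Grönwall estimate with the Cauchy–Schwarz inequality yields the mean-squared-error form used in Proposition 2, with multiplicative constant C = e^{2L}.) -/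

import Mathlib

/-!
Along the straight path `φ t = (1 - t) • x₀ + t • g`, the discrepancy `f = ψ - φ` starts at `0`
and satisfies `‖f'‖ ≤ L ‖f‖ + ε` with `ε t = ‖v t (φ t) - (g - x₀)‖`, because `v t` is
`L`-Lipschitz. Comparing `‖f‖` with the barriers `exp ((L + δ) t) (δ + ∫₀ᵗ ε)` and letting
`δ → 0` gives `‖f 1‖ ≤ exp L ∫₀¹ ε`; squaring and applying Jensen's inequality
`(∫₀¹ ε)² ≤ ∫₀¹ ε²` yields the bound.
-/

open Set MeasureTheory Filter Topology

theorem ContinuousOn.hasDerivWithinAt_integral_Icc {E : Type*} [NormedAddCommGroup E]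
    [NormedSpace ℝ E] [CompleteSpace E] {f : ℝ → E} {a b x : ℝ} (hf : ContinuousOn f (Icc a b))
    (hx : x ∈ Icc a b) : HasDerivWithinAt (fun t => ∫ s in a..t, f s) (f x) (Icc a b) x := by
  have : Fact (x ∈ Icc a b) := ⟨hx⟩
  refine intervalIntegral.integral_hasDerivWithinAt_right ?_
    (hf.stronglyMeasurableAtFilter_nhdsWithin measurableSet_Icc x) (hf x hx)
  exact (hf.mono (Icc_subset_Icc_right hx.2)).intervalIntegrable_of_Icc hx.1

theorem sq_intervalIntegral_le_mul_integral_sq {f : ℝ → ℝ} {a b : ℝ} (hab : a ≤ b)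
    (hf : IntervalIntegrable f volume a b)
    (hf2 : IntervalIntegrable (fun x => f x ^ 2) volume a b) :
    (∫ x in a..b, f x) ^ 2 ≤ (b - a) * ∫ x in a..b, f x ^ 2 := by
  rcases hab.eq_or_lt with rfl | hab
  · simp
  have hvol : volume.real (Ioc a b) = b - a := by simp [hab.le]
  have jensen := even_two.convexOn_pow.map_set_average_le (continuousOn_pow 2) isClosed_univ
    (by simp [hab]) (by simp) (ae_of_all _ fun x => mem_univ (f x)) hf.1 hf2.1
  simp only [setAverage_eq, hvol, smul_eq_mul] at jensen
  rw [intervalIntegral.integral_of_le hab.le, intervalIntegral.integral_of_le hab.le]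
  have hba : 0 < b - a := sub_pos.2 hab
  rw [mul_pow, inv_pow, ← div_eq_inv_mul, ← div_eq_inv_mul,
    div_le_div_iff₀ (by positivity) hba] at jensen
  nlinarith

theorem LipschitzWith.norm_sub_le_mul_norm_sub_add {E F : Type*} [SeminormedAddCommGroup E]
    [SeminormedAddCommGroup F] {K : NNReal} {u : E → F} (hu : LipschitzWith K u) (x y : E)
    (w : F) : ‖u x - w‖ ≤ K * ‖x - y‖ + ‖u y - w‖ := by
  have := hu.dist_le_mul x y
  rw [dist_eq_norm, dist_eq_norm] at this
  calc ‖u x - w‖ ≤ ‖u x - u y‖ + ‖u y - w‖ := norm_sub_le_norm_sub_add_norm_sub _ _ _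
    _ ≤ K * ‖x - y‖ + ‖u y - w‖ := by gcongr

theorem norm_le_exp_add_mul_add_integral_of_norm_deriv_right_le {E : Type*}
    [NormedAddCommGroup E] [NormedSpace ℝ E] {f f' : ℝ → E} {ε : ℝ → ℝ} {L δ a b : ℝ}
    (hL : 0 ≤ L) (hδ : 0 < δ)
    (hf : ContinuousOn f (Icc a b)) (hf' : ∀ x ∈ Ico a b, HasDerivWithinAt f (f' x) (Ici x) x)
    (hε : ContinuousOn ε (Icc a b)) (hε₀ : ∀ x ∈ Icc a b, 0 ≤ ε x)
    (bound : ∀ x ∈ Ico a b, ‖f' x‖ ≤ L * ‖f x‖ + ε x) :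
    ∀ t ∈ Icc a b, ‖f t‖ ≤ Real.exp ((L + δ) * (t - a)) * (‖f a‖ + δ + ∫ s in a..t, ε s) := by
  set I : ℝ → ℝ := fun x => ∫ s in a..x, ε s
  set B : ℝ → ℝ := fun x => Real.exp ((L + δ) * (x - a)) * (‖f a‖ + δ + I x)
  have hB : ∀ x ∈ Icc a b, HasDerivWithinAt B
      ((L + δ) * B x + Real.exp ((L + δ) * (x - a)) * ε x) (Icc a b) x := by
    intro x hx
    have hexp := (((hasDerivAt_id x).sub_const a).const_mul (L + δ)).exp
    refine (hexp.hasDerivWithinAt.mul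
      ((hε.hasDerivWithinAt_integral_Icc hx).const_add (‖f a‖ + δ))).congr_deriv ?_
    simp only [B, id]
    ring
  refine image_norm_le_of_norm_deriv_right_lt_deriv_boundary' hf hf' ?_
    (fun x hx => (hB x hx).continuousWithinAt)
    (fun x hx => (hB x (Ico_subset_Icc_self hx)).mono_of_mem_nhdsWithin
      (Icc_mem_nhdsGE_of_mem hx)) ?_
  · simp [hδ.le]
  · intro x hx hfx
    have hx' := Ico_subset_Icc_self hx
    have hexp : 1 ≤ Real.exp ((L + δ) * (x - a)) :=
      Real.one_le_exp (mul_nonneg (by linarith) (sub_nonneg.2 hx.1))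
    have hI₀ : 0 ≤ I x :=
      intervalIntegral.integral_nonneg hx.1 fun s hs => hε₀ s ⟨hs.1, hs.2.trans hx'.2⟩
    have hBpos : 0 < B x := mul_pos (Real.exp_pos _) (by linarith [norm_nonneg (f a)])
    -- the extra rate `δ` is what makes the barrier inequality strict
    calc ‖f' x‖ ≤ L * ‖f x‖ + ε x := bound x hx
      _ = L * B x + ε x := by rw [hfx]
      _ < (L + δ) * B x + Real.exp ((L + δ) * (x - a)) * ε x := by
        nlinarith [hε₀ x hx']

theorem norm_le_exp_mul_add_integral_of_norm_deriv_right_le {E : Type*} [NormedAddCommGroup E]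
    [NormedSpace ℝ E] {f f' : ℝ → E} {ε : ℝ → ℝ} {L a b : ℝ} (hL : 0 ≤ L)
    (hf : ContinuousOn f (Icc a b)) (hf' : ∀ x ∈ Ico a b, HasDerivWithinAt f (f' x) (Ici x) x)
    (hε : ContinuousOn ε (Icc a b)) (hε₀ : ∀ x ∈ Icc a b, 0 ≤ ε x)
    (bound : ∀ x ∈ Ico a b, ‖f' x‖ ≤ L * ‖f x‖ + ε x) :
    ∀ t ∈ Icc a b, ‖f t‖ ≤ Real.exp (L * (t - a)) * (‖f a‖ + ∫ s in a..t, ε s) := by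
  intro t ht
  set I := ∫ s in a..t, ε s
  have hlim : Tendsto (fun δ => Real.exp ((L + δ) * (t - a)) * (‖f a‖ + δ + I)) (𝓝[>] 0)
      (𝓝 (Real.exp (L * (t - a)) * (‖f a‖ + I))) := by
    have hcont : Continuous fun δ => Real.exp ((L + δ) * (t - a)) * (‖f a‖ + δ + I) := by
      fun_prop
    simpa using (hcont.tendsto 0).mono_left nhdsWithin_le_nhds
  exact ge_of_tendsto hlim <| eventually_nhdsWithin_of_forall fun δ hδ =>
    norm_le_exp_add_mul_add_integral_of_norm_deriv_right_le hL hδ hf hf' hε hε₀ bound t ht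

theorem gronwall_flow_discrepancy_sq_general {E : Type*} [NormedAddCommGroup E]
    [NormedSpace ℝ E]
    (x₀ g : E) (L : ℝ) (hL : 0 ≤ L)
    (v : ℝ → E → E)
    (hlip : ∀ t ∈ Set.Icc (0 : ℝ) 1, LipschitzWith L.toNNReal (v t))
    (hcont : ContinuousOn
      (fun t : ℝ => v t ((1 - t) • x₀ + t • g)) (Set.Icc (0 : ℝ) 1))
    (ψ : ℝ → E) (hψ0 : ψ 0 = x₀)
    (hderiv : ∀ t ∈ Set.Icc (0 : ℝ) 1, HasDerivAt ψ (v t (ψ t)) t) :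
    ‖ψ 1 - g‖ ^ 2 ≤ Real.exp (2 * L) *
      ∫ t in (0 : ℝ)..1, ‖v t ((1 - t) • x₀ + t • g) - (g - x₀)‖ ^ 2 := by
  set φ : ℝ → E := fun t => (1 - t) • x₀ + t • g
  set ε : ℝ → ℝ := fun t => ‖v t (φ t) - (g - x₀)‖
  have hεc : ContinuousOn ε (Icc 0 1) := (hcont.sub continuousOn_const).norm
  have hφ : ∀ t, HasDerivAt φ (g - x₀) t := by
    rw [show φ = AffineMap.lineMap x₀ g from
      funext fun t => (AffineMap.lineMap_apply_module _ _ t).symm]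
    exact fun t => AffineMap.hasDerivAt_lineMap
  have hdiff : ∀ t ∈ Icc (0 : ℝ) 1,
      HasDerivAt (fun t => ψ t - φ t) (v t (ψ t) - (g - x₀)) t :=
    fun t ht => (hderiv t ht).sub (hφ t)
  have hbound : ∀ t ∈ Ico (0 : ℝ) 1, ‖v t (ψ t) - (g - x₀)‖ ≤ L * ‖ψ t - φ t‖ + ε t :=
    fun t ht => by
      have hvt := (hlip t (Ico_subset_Icc_self ht)).norm_sub_le_mul_norm_sub_add (ψ t) (φ t) (g - x₀)
      rwa [Real.coe_toNNReal L hL] at hvt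
  have gronwall : ‖ψ 1 - g‖ ≤ Real.exp L * ∫ t in (0 : ℝ)..1, ε t := by
    simpa [φ, hψ0] using norm_le_exp_mul_add_integral_of_norm_deriv_right_le hL
      (fun t ht => (hdiff t ht).continuousAt.continuousWithinAt)
      (fun t ht => (hdiff t (Ico_subset_Icc_self ht)).hasDerivWithinAt) hεc
      (fun t _ => norm_nonneg _) hbound 1 (right_mem_Icc.2 zero_le_one)
  have jensen := sq_intervalIntegral_le_mul_integral_sq zero_le_one
    (hεc.intervalIntegrable_of_Icc zero_le_one)
    ((hεc.pow 2).intervalIntegrable_of_Icc zero_le_one)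
  calc ‖ψ 1 - g‖ ^ 2 ≤ (Real.exp L * ∫ t in (0 : ℝ)..1, ε t) ^ 2 := by gcongr
    _ = Real.exp (2 * L) * (∫ t in (0 : ℝ)..1, ε t) ^ 2 := by
      rw [mul_pow, ← Real.exp_nat_mul]
      norm_num
    _ ≤ Real.exp (2 * L) * ∫ t in (0 : ℝ)..1, ε t ^ 2 := by
      gcongr
      simpa using jensen

/-- Squared Grönwall flow-discrepancy bound: combining the Grönwall estimate
with Cauchy–Schwarz yields the mean-squared-error form used in Proposition 2,
with multiplicative constant `C = e^{2L}`. -/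
theorem gronwall_flow_discrepancy_sq {E : Type*} [NormedAddCommGroup E]
    [NormedSpace ℝ E] [CompleteSpace E]
    (x₀ g : E) (L : ℝ) (hL : 0 ≤ L)
    (v : ℝ → E → E)
    (hlip : ∀ t ∈ Set.Icc (0 : ℝ) 1, LipschitzWith L.toNNReal (v t))
    (hcont : ContinuousOn
      (fun t : ℝ => v t ((1 - t) • x₀ + t • g)) (Set.Icc (0 : ℝ) 1))
    (ψ : ℝ → E) (hψ0 : ψ 0 = x₀)
    (hderiv : ∀ t ∈ Set.Icc (0 : ℝ) 1, HasDerivAt ψ (v t (ψ t)) t) :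
    ‖ψ 1 - g‖ ^ 2 ≤ Real.exp (2 * L) *
      ∫ t in (0 : ℝ)..1, ‖v t ((1 - t) • x₀ + t • g) - (g - x₀)‖ ^ 2 :=
  gronwall_flow_discrepancy_sq_general x₀ g L hL v hlip hcont ψ hψ0 hderiv
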